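/- Let V = ℝ^d, let Ω ⊆ P(V) be a connected open set, and let Ω* = {[f] ∈ P(V*) : f(x) ≠ 0 ∀ [x] ∈ Ω}, assumed compact with nonempty interior. Define C_Ω(x,y) = sup over [f],[g] ∈ Ω* of (1/2)|log|f(x)g(y)/(f(y)g(x))||, a metric generating the standard topology on Ω. If (Ω, C_Ω) is a complete metric space, then Ω is dual convex: for every x ∈ ∂Ω there exists [ξ] ∈ Ω* with ξ(x) = 0. -/

import Mathlib

open scoped LinearAlgebra.Projectivization
open Projectivization

/-- The quotient topology on a projectivization. -/
instance projTopology {K V : Type*} [DivisionRing K] [AddCommGroup V] [Module K V]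
    [TopologicalSpace V] : TopologicalSpace (ℙ K V) :=
  inferInstanceAs (TopologicalSpace (Quotient (projectivizationSetoid K V)))

/-- `C_Ω(x,y) = sup_{[f],[g] ∈ Ω*} (1/2)|log|f(x)g(y)/(f(y)g(x))||`. -/
noncomputable def crossDist {V : Type*} [NormedAddCommGroup V] [NormedSpace ℝ V]
    (Ωd : Set (ℙ ℝ (StrongDual ℝ V))) (x y : ℙ ℝ V) : ℝ :=
  sSup {r : ℝ | ∃ f ∈ Ωd, ∃ g ∈ Ωd,
    r = (1/2) * |Real.log (abs ((f.rep x.rep * g.rep y.rep) / (f.rep y.rep * g.rep x.rep)))|}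

/-!
Suppose `x ∈ ∂Ω` is annihilated by no `[ξ] ∈ Ω*`. By compactness of `Ω*`, a representative of
`x` stays a uniform distance away from every hyperplane `ker ξ`, `[ξ] ∈ Ω*`, and near it `C_Ω` is
Lipschitz with respect to the norm of `V`. Hence a sequence of `Ω` converging to `x` is
`C_Ω`-Cauchy, so by completeness it `C_Ω`-converges to some `y ∈ Ω`, and the triangle inequality
gives `C_Ω(x, y) = 0`. Because `Ω*` has nonempty interior, this forces `x = y`, whereas `x ∉ Ω`
since `Ω` is open.
-/

theorem Real.abs_log_sub_log_le {a b c : ℝ} (hc : 0 < c) (ha : c ≤ a) (hb : c ≤ b) :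
    |Real.log a - Real.log b| ≤ |a - b| / c := by
  wlog hba : b ≤ a generalizing a b
  · rw [abs_sub_comm, abs_sub_comm a]
    exact this hb ha (le_of_not_ge hba)
  have hb0 : 0 < b := hc.trans_le hb
  have ha0 : 0 < a := hb0.trans_le hba
  rw [abs_of_nonneg (sub_nonneg.2 (Real.log_le_log hb0 hba)), abs_of_nonneg (sub_nonneg.2 hba)]
  calc Real.log a - Real.log b = Real.log (a / b) := (Real.log_div ha0.ne' hb0.ne').symm
    _ ≤ a / b - 1 := Real.log_le_sub_one_of_pos (by positivity)
    _ = (a - b) / b := by field_simp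
    _ ≤ (a - b) / c := by gcongr

namespace Projectivization

section Topology

variable {K V : Type*} [DivisionRing K] [AddCommGroup V] [Module K V] [TopologicalSpace V]

theorem continuous_mk' : Continuous (mk' K : {v : V // v ≠ 0} → ℙ K V) :=
  continuous_quot_mk

theorem continuous_lift {α : Type*} [TopologicalSpace α] {f : {v : V // v ≠ 0} → α}
    (hf : ∀ (a b : {v : V // v ≠ 0}) (t : K), a = t • (b : V) → f a = f b)
    (hc : Continuous f) : Continuous (Projectivization.lift f hf) :=
  continuous_quot_lift _ hc

theorem isOpenMap_mk' [ContinuousConstSMul K V] :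
    IsOpenMap (mk' K : {v : V // v ≠ 0} → ℙ K V) := by
  intro U hU
  have hsat : mk' K ⁻¹' (mk' K '' U) = ⋃ a : Kˣ,
      (fun w : {v : V // v ≠ 0} => (⟨(a : K) • w.1, smul_ne_zero a.ne_zero w.2⟩ :
        {v : V // v ≠ 0})) ⁻¹' U := by
    ext w
    simp only [Set.mem_preimage, Set.mem_image, Set.mem_iUnion, mk'_eq_mk]
    constructor
    · rintro ⟨u, hu, huw⟩
      obtain ⟨a, ha⟩ := (mk_eq_mk_iff K _ _ u.2 w.2).1 huw
      exact ⟨a, by rwa [show (⟨(a : K) • w.1, _⟩ : {v : V // v ≠ 0}) = u from Subtype.ext ha]⟩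
    · rintro ⟨a, ha⟩
      exact ⟨_, ha, (mk_eq_mk_iff K _ _ _ w.2).2 ⟨a, rfl⟩⟩
  refine isQuotientMap_quot_mk.isOpen_preimage.mp ?_
  change IsOpen (mk' K ⁻¹' (mk' K '' U))
  rw [hsat]
  exact isOpen_iUnion fun a =>
    hU.preimage ((continuous_subtype_val.const_smul (a : K)).subtype_mk _)

theorem nonempty_interior_image_val_preimage_mk' [T1Space V] {s : Set (ℙ K V)}
    (hs : (interior s).Nonempty) :
    (interior (Subtype.val '' (mk' K ⁻¹' s) : Set V)).Nonempty := by
  obtain ⟨x, hx⟩ := hs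
  have hopen : IsOpen (Subtype.val '' (mk' K ⁻¹' interior s) : Set V) :=
    (isOpen_ne (x := 0)).isOpenMap_subtype_val _ (isOpen_interior.preimage continuous_mk')
  exact ⟨x.rep, interior_maximal (Set.image_mono (Set.preimage_mono interior_subset)) hopen
    ⟨⟨x.rep, x.rep_nonzero⟩, by simpa using hx, rfl⟩⟩

theorem mem_closure_inter_preimage_mk' [ContinuousConstSMul K V] {s : Set (ℙ K V)}
    {v : {v : V // v ≠ 0}} (hv : mk' K v ∈ closure s) {U : Set {v : V // v ≠ 0}}
    (hU : IsOpen U) (hvU : v ∈ U) : v ∈ closure (U ∩ mk' K ⁻¹' s) :=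
  hU.inter_closure
    ⟨hvU, by rwa [← isOpenMap_mk'.preimage_closure_eq_closure_preimage continuous_mk']⟩

end Topology

end Projectivization

section CrossRatio

open Real Filter Topology

variable {V : Type*} [NormedAddCommGroup V] [NormedSpace ℝ V]

theorem interior_setOf_apply_eq_zero {c : V} (hc : c ≠ 0) :
    interior {ξ : StrongDual ℝ V | ξ c = 0} = ∅ := by
  by_contra hne
  obtain ⟨ξ, hξ⟩ := SeparatingDual.exists_ne_zero (R := ℝ) hc
  have htop := (ContinuousLinearMap.apply ℝ ℝ c : StrongDual ℝ V →L[ℝ] ℝ).ker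
    |>.eq_top_of_nonempty_interior' (Set.nonempty_iff_ne_empty.2 hne)
  exact hξ (LinearMap.mem_ker.1 (htop ▸ Submodule.mem_top : ξ ∈ _))

theorem eq_or_eq_neg_of_forall_abs_apply_eq {s : Set (StrongDual ℝ V)}
    (hs : (interior s).Nonempty) {a b : V} (h : ∀ ξ ∈ s, |ξ a| = |ξ b|) :
    a = b ∨ a = -b := by
  by_contra! hab
  have hsub : s ⊆ {ξ | ξ (a - b) = 0} ∪ {ξ | ξ (a + b) = 0} := fun ξ hξ => by
    simpa [sub_eq_zero, add_eq_zero_iff_eq_neg] using abs_eq_abs.1 (h ξ hξ)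
  have hint := interior_mono hsub
  rw [interior_union_isClosed_of_interior_empty (isClosed_eq (by fun_prop) continuous_const)
      (interior_setOf_apply_eq_zero (add_eq_zero_iff_eq_neg.not.2 hab.2)),
    interior_setOf_apply_eq_zero (sub_ne_zero.2 hab.1)] at hint
  exact hs.ne_empty (Set.subset_empty_iff.1 hint)

theorem abs_log_abs_apply_sub_le {f : StrongDual ℝ V} (hf : f ≠ 0) {δ : ℝ} (hδ : 0 < δ)
    {w w' : V} (hw : δ * ‖f‖ ≤ |f w|) (hw' : δ * ‖f‖ ≤ |f w'|) :
    |(log |f w| - log |f w'|)| ≤ ‖w - w'‖ / δ := by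
  have hf0 : 0 < ‖f‖ := norm_pos_iff.2 hf
  calc |(log |f w| - log |f w'|)| ≤ |(|f w| - |f w'|)| / (δ * ‖f‖) :=
        Real.abs_log_sub_log_le (by positivity) hw hw'
    _ ≤ ‖f‖ * ‖w - w'‖ / (δ * ‖f‖) := by
        gcongr
        exact (abs_abs_sub_abs_le_abs_sub _ _).trans (by simpa using f.le_opNorm (w - w'))
    _ = ‖w - w'‖ / δ := by field_simp

noncomputable def crossRatio (f g : StrongDual ℝ V) (w w' : V) : ℝ :=
  f w * g w' / (f w' * g w)

theorem crossRatio_smul_left (f g : StrongDual ℝ V) {c : ℝ} (hc : c ≠ 0) (w w' : V) :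
    crossRatio f g (c • w) w' = crossRatio f g w w' := by
  simp only [crossRatio, map_smul, smul_eq_mul]
  rw [mul_assoc, mul_left_comm _ c, mul_div_mul_left _ _ hc]

theorem crossRatio_smul_right (f g : StrongDual ℝ V) {c : ℝ} (hc : c ≠ 0) (w w' : V) :
    crossRatio f g w (c • w') = crossRatio f g w w' := by
  simp only [crossRatio, map_smul, smul_eq_mul]
  rw [mul_left_comm, mul_assoc, mul_div_mul_left _ _ hc]

theorem crossRatio_swap (f g : StrongDual ℝ V) (w w' : V) :
    crossRatio g f w' w = crossRatio f g w w' := by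
  simp only [crossRatio]
  ring

theorem crossRatio_mul_crossRatio (f g : StrongDual ℝ V) {z : V} (hf : f z ≠ 0) (hg : g z ≠ 0)
    (w w' : V) : crossRatio f g w z * crossRatio f g z w' = crossRatio f g w w' := by
  simp only [crossRatio]
  calc f w * g z / (f z * g w) * (f z * g w' / (f w' * g z))
      = f w * g w' / (f w' * g w) * (f z / f z) * (g z / g z) := by ring
    _ = f w * g w' / (f w' * g w) := by rw [div_self hf, div_self hg, mul_one, mul_one]

theorem log_abs_crossRatio {f g : StrongDual ℝ V} {w w' : V} (hfw : f w ≠ 0) (hfw' : f w' ≠ 0)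
    (hgw : g w ≠ 0) (hgw' : g w' ≠ 0) :
    log |crossRatio f g w w'| = (log |f w| - log |f w'|) - (log |g w| - log |g w'|) := by
  simp only [crossRatio, abs_div, abs_mul]
  rw [log_div (by positivity) (by positivity), log_mul (by positivity) (by positivity),
    log_mul (by positivity) (by positivity)]
  ring

variable (Ωd : Set (ℙ ℝ (StrongDual ℝ V)))

def crossRatioSet (w w' : V) : Set ℝ :=
  {r | ∃ f ∈ Ωd, ∃ g ∈ Ωd, r = 1 / 2 * |log (|crossRatio f.rep g.rep w w'|)|}

theorem crossDist_eq_sSup (x y : ℙ ℝ V) :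
    crossDist Ωd x y = sSup (crossRatioSet Ωd x.rep y.rep) :=
  rfl

/-- `|φ w| / ‖φ‖` is the distance from `w` to the hyperplane `ker φ`. -/
def FarFromKernels (δ : ℝ) (w : V) : Prop :=
  ∀ φ ∈ Ωd, δ * ‖φ.rep‖ ≤ |φ.rep w|

variable {Ωd}

theorem FarFromKernels.mono {δ δ' : ℝ} {w : V} (h : FarFromKernels Ωd δ w) (hδ : δ' ≤ δ) :
    FarFromKernels Ωd δ' w := fun φ hφ =>
  (mul_le_mul_of_nonneg_right hδ (norm_nonneg _)).trans (h φ hφ)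

theorem FarFromKernels.of_dist_le {δ ε : ℝ} {v w : V} (h : FarFromKernels Ωd δ v)
    (hw : dist w v ≤ ε) : FarFromKernels Ωd (δ - ε) w := by
  intro φ hφ
  have hφw : |φ.rep v| - |φ.rep w| ≤ ‖φ.rep‖ * ε :=
    calc |φ.rep v| - |φ.rep w| ≤ |φ.rep (v - w)| := by
          rw [map_sub]; exact abs_sub_abs_le_abs_sub _ _
      _ ≤ ‖φ.rep‖ * ‖v - w‖ := by simpa using φ.rep.le_opNorm (v - w)
      _ ≤ ‖φ.rep‖ * ε := by rw [← dist_eq_norm, dist_comm]; gcongr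
  linarith [h φ hφ]

theorem FarFromKernels.apply_ne_zero {δ : ℝ} (hδ : 0 < δ) {w : V} (h : FarFromKernels Ωd δ w)
    {φ : ℙ ℝ (StrongDual ℝ V)} (hφ : φ ∈ Ωd) : φ.rep w ≠ 0 := by
  have : 0 < δ * ‖φ.rep‖ := mul_pos hδ (norm_pos_iff.2 φ.rep_nonzero)
  exact abs_pos.1 (this.trans_le (h φ hφ))

theorem exists_farFromKernels (hcpt : IsCompact Ωd) {w : V} (hw : ∀ φ ∈ Ωd, φ.rep w ≠ 0) :
    ∃ δ > 0, FarFromKernels Ωd δ w := by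
  let G : ℙ ℝ (StrongDual ℝ V) → ℝ := Projectivization.lift
    (fun ξ => |ξ.1 w| / ‖ξ.1‖) (by
      rintro ⟨_, ha⟩ ⟨b, hb⟩ t rfl
      have ht : t ≠ 0 := by rintro rfl; simp at ha
      simp only [FunLike.coe_smul, Pi.smul_apply, smul_eq_mul, norm_smul, abs_mul,
        Real.norm_eq_abs]
      exact mul_div_mul_left _ _ (abs_ne_zero.2 ht))
  have hG : ∀ φ, G φ = |φ.rep w| / ‖φ.rep‖ := fun φ => by
    conv_lhs => rw [← φ.mk_rep]
    rfl
  have hGc : Continuous G := continuous_lift _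
    ((continuous_subtype_val.clm_apply continuous_const).abs.div
      continuous_subtype_val.norm fun ξ => norm_ne_zero_iff.2 ξ.2)
  obtain ⟨δ, hδ, hδG⟩ := hcpt.exists_forall_le' hGc.continuousOn fun φ hφ => by
    rw [hG]; exact div_pos (abs_pos.2 (hw φ hφ)) (norm_pos_iff.2 φ.rep_nonzero)
  refine ⟨δ, hδ, fun φ hφ => ?_⟩
  have := hδG φ hφ
  rwa [hG, le_div_iff₀ (norm_pos_iff.2 φ.rep_nonzero)] at this

theorem crossRatioSet_smul_left {c : ℝ} (hc : c ≠ 0) (w w' : V) :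
    crossRatioSet Ωd (c • w) w' = crossRatioSet Ωd w w' := by
  simp only [crossRatioSet, crossRatio_smul_left _ _ hc]

theorem crossRatioSet_smul_right {c : ℝ} (hc : c ≠ 0) (w w' : V) :
    crossRatioSet Ωd w (c • w') = crossRatioSet Ωd w w' := by
  simp only [crossRatioSet, crossRatio_smul_right _ _ hc]

theorem crossRatioSet_comm (w w' : V) : crossRatioSet Ωd w w' = crossRatioSet Ωd w' w := by
  ext r
  constructor <;>
  · rintro ⟨f, hf, g, hg, rfl⟩
    exact ⟨g, hg, f, hf, by rw [crossRatio_swap]⟩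

theorem le_div_of_mem_crossRatioSet {δ : ℝ} (hδ : 0 < δ) {w w' : V}
    (hw : FarFromKernels Ωd δ w) (hw' : FarFromKernels Ωd δ w') :
    ∀ r ∈ crossRatioSet Ωd w w', r ≤ ‖w - w'‖ / δ := by
  rintro r ⟨f, hf, g, hg, rfl⟩
  have hf0 := f.rep_nonzero
  have hg0 := g.rep_nonzero
  rw [log_abs_crossRatio (hw.apply_ne_zero hδ hf) (hw'.apply_ne_zero hδ hf)
    (hw.apply_ne_zero hδ hg) (hw'.apply_ne_zero hδ hg)]
  have hfl := abs_log_abs_apply_sub_le hf0 hδ (hw f hf) (hw' f hf)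
  have hgl := abs_log_abs_apply_sub_le hg0 hδ (hw g hg) (hw' g hg)
  linarith [abs_sub (log |f.rep w| - log |f.rep w'|) (log |g.rep w| - log |g.rep w'|)]

theorem bddAbove_crossRatioSet (hcpt : IsCompact Ωd) {w w' : V}
    (hw : ∀ φ ∈ Ωd, φ.rep w ≠ 0) (hw' : ∀ φ ∈ Ωd, φ.rep w' ≠ 0) :
    BddAbove (crossRatioSet Ωd w w') := by
  obtain ⟨δ, hδ, hδw⟩ := exists_farFromKernels hcpt hw
  obtain ⟨δ', hδ', hδw'⟩ := exists_farFromKernels hcpt hw'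
  exact ⟨_, le_div_of_mem_crossRatioSet (lt_min hδ hδ') (hδw.mono (min_le_left _ _))
    (hδw'.mono (min_le_right _ _))⟩

theorem crossDist_mk' (w w' : {v : V // v ≠ 0}) :
    crossDist Ωd (mk' ℝ w) (mk' ℝ w') = sSup (crossRatioSet Ωd w w') := by
  obtain ⟨a, ha⟩ := exists_smul_eq_mk_rep ℝ w.1 w.2
  obtain ⟨a', ha'⟩ := exists_smul_eq_mk_rep ℝ w'.1 w'.2
  rw [crossDist_eq_sSup, mk'_eq_mk, mk'_eq_mk, ← ha, ← ha', Units.smul_def, Units.smul_def,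
    crossRatioSet_smul_left a.ne_zero, crossRatioSet_smul_right a'.ne_zero]

theorem crossDist_comm (x y : ℙ ℝ V) : crossDist Ωd x y = crossDist Ωd y x := by
  rw [crossDist_eq_sSup, crossDist_eq_sSup, crossRatioSet_comm]

theorem crossDist_nonneg (x y : ℙ ℝ V) : 0 ≤ crossDist Ωd x y :=
  Real.sSup_nonneg fun _ ⟨_, _, _, _, hr⟩ => hr ▸ by positivity

theorem crossDist_mk'_le {δ : ℝ} (hδ : 0 < δ) {w w' : {v : V // v ≠ 0}}
    (hw : FarFromKernels Ωd δ w) (hw' : FarFromKernels Ωd δ w') :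
    crossDist Ωd (mk' ℝ w) (mk' ℝ w') ≤ dist w w' / δ := by
  rw [crossDist_mk', Subtype.dist_eq, dist_eq_norm]
  exact Real.sSup_le (le_div_of_mem_crossRatioSet hδ hw hw') (by positivity)

theorem exists_crossDist_lt_of_cauchySeq {δ : ℝ} (hδ : 0 < δ) {w : ℕ → {v : V // v ≠ 0}}
    (hw : CauchySeq w) (hδw : ∀ n, FarFromKernels Ωd δ (w n)) {ε : ℝ} (hε : 0 < ε) :
    ∃ N : ℕ, ∀ m ≥ N, ∀ n ≥ N, crossDist Ωd (mk' ℝ (w m)) (mk' ℝ (w n)) < ε := by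
  obtain ⟨N, hN⟩ := Metric.cauchySeq_iff.1 hw (ε * δ) (by positivity)
  refine ⟨N, fun m hm n hn => (crossDist_mk'_le hδ (hδw m) (hδw n)).trans_lt ?_⟩
  rw [div_lt_iff₀ hδ]
  exact hN m hm n hn

theorem tendsto_crossDist_mk' {δ : ℝ} (hδ : 0 < δ) {w : ℕ → {v : V // v ≠ 0}}
    {v : {v : V // v ≠ 0}} (hw : Tendsto w atTop (𝓝 v)) (hδw : ∀ n, FarFromKernels Ωd δ (w n))
    (hδv : FarFromKernels Ωd δ v) :
    Tendsto (fun n => crossDist Ωd (mk' ℝ (w n)) (mk' ℝ v)) atTop (𝓝 0) := by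
  refine squeeze_zero (fun n => crossDist_nonneg _ _) (fun n => crossDist_mk'_le hδ (hδw n) hδv) ?_
  simpa using (tendsto_iff_dist_tendsto_zero.1 hw).div_const δ

theorem crossDist_triangle (hcpt : IsCompact Ωd) {x y z : ℙ ℝ V}
    (hx : ∀ φ ∈ Ωd, φ.rep x.rep ≠ 0) (hy : ∀ φ ∈ Ωd, φ.rep y.rep ≠ 0)
    (hz : ∀ φ ∈ Ωd, φ.rep z.rep ≠ 0) :
    crossDist Ωd x y ≤ crossDist Ωd x z + crossDist Ωd z y := by
  have hxz0 := crossDist_nonneg (Ωd := Ωd) x z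
  have hzy0 := crossDist_nonneg (Ωd := Ωd) z y
  simp only [crossDist_eq_sSup] at hxz0 hzy0 ⊢
  refine Real.sSup_le ?_ (add_nonneg hxz0 hzy0)
  rintro r ⟨f, hf, g, hg, rfl⟩
  have hxz := le_csSup (bddAbove_crossRatioSet hcpt hx hz) ⟨f, hf, g, hg, rfl⟩
  have hzy := le_csSup (bddAbove_crossRatioSet hcpt hz hy) ⟨f, hf, g, hg, rfl⟩
  rw [← crossRatio_mul_crossRatio _ _ (hz f hf) (hz g hg)]
  rcases eq_or_ne (crossRatio f.rep g.rep x.rep z.rep * crossRatio f.rep g.rep z.rep y.rep) 0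
    with h0 | h0
  · rw [h0, abs_zero, log_zero, abs_zero, mul_zero]
    exact add_nonneg hxz0 hzy0
  · rw [abs_mul, log_mul (abs_ne_zero.2 (left_ne_zero_of_mul h0))
      (abs_ne_zero.2 (right_ne_zero_of_mul h0))]
    linarith [abs_add_le (log |crossRatio f.rep g.rep x.rep z.rep|)
      (log |crossRatio f.rep g.rep z.rep y.rep|)]

theorem eq_of_crossDist_nonpos (hcpt : IsCompact Ωd) (hint : (interior Ωd).Nonempty)
    {x y : ℙ ℝ V} (hx : ∀ φ ∈ Ωd, φ.rep x.rep ≠ 0) (hy : ∀ φ ∈ Ωd, φ.rep y.rep ≠ 0)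
    (hxy : crossDist Ωd x y ≤ 0) : x = y := by
  have hcr : ∀ f ∈ Ωd, ∀ g ∈ Ωd, |f.rep x.rep * g.rep y.rep| = |f.rep y.rep * g.rep x.rep| := by
    intro f hf g hg
    have hle := le_csSup (bddAbove_crossRatioSet hcpt hx hy) ⟨f, hf, g, hg, rfl⟩
    have hlog : log |crossRatio f.rep g.rep x.rep y.rep| = 0 := by
      rw [← crossDist_eq_sSup] at hle
      exact abs_eq_zero.1 (le_antisymm (by linarith) (abs_nonneg _))
    have hden : f.rep y.rep * g.rep x.rep ≠ 0 := mul_ne_zero (hy f hf) (hx g hg)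
    have hone := Real.eq_one_of_pos_of_log_eq_zero
      (abs_pos.2 (div_ne_zero (mul_ne_zero (hx f hf) (hy g hg)) hden)) hlog
    rwa [abs_div, div_eq_one_iff_eq (abs_ne_zero.2 hden)] at hone
  obtain ⟨φ₀, hφ₀⟩ := hint
  have hφ₀Ωd := interior_subset hφ₀
  -- with `g = φ₀.rep` fixed, `hcr` says `|ξ a| = |ξ b|` for `ξ` in an open set of functionals
  have hpm : φ₀.rep y.rep • x.rep = φ₀.rep x.rep • y.rep ∨
      φ₀.rep y.rep • x.rep = -(φ₀.rep x.rep • y.rep) := by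
    refine eq_or_eq_neg_of_forall_abs_apply_eq
      (nonempty_interior_image_val_preimage_mk' ⟨φ₀, hφ₀⟩) ?_
    rintro _ ⟨ξ, hξ, rfl⟩
    obtain ⟨a, ha⟩ := exists_smul_eq_mk_rep ℝ ξ.1 ξ.2
    have h := hcr _ hξ φ₀ hφ₀Ωd
    rw [mk'_eq_mk, ← ha] at h
    simp only [abs_mul, Units.smul_def, FunLike.coe_smul, Pi.smul_apply, smul_eq_mul,
      map_smul, mul_assoc, mul_eq_mul_left_iff, abs_eq_zero, a.ne_zero, or_false] at h ⊢
    rw [mul_comm, h, mul_comm]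
  rw [← x.mk_rep, ← y.mk_rep, mk_eq_mk_iff']
  have hy₀ : φ₀.rep y.rep ≠ 0 := hy φ₀ hφ₀Ωd
  rcases hpm with h | h
  · exact ⟨(φ₀.rep y.rep)⁻¹ * φ₀.rep x.rep, by rw [mul_smul, ← h, inv_smul_smul₀ hy₀]⟩
  · exact ⟨-((φ₀.rep y.rep)⁻¹ * φ₀.rep x.rep), by
      rw [neg_smul, mul_smul, ← smul_neg, ← h, inv_smul_smul₀ hy₀]⟩

end CrossRatio

theorem stmt_11_general (d : ℕ)
    (Ω : Set (ℙ ℝ (Fin d → ℝ))) (hopen : IsOpen Ω)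
    (Ωd : Set (ℙ ℝ (StrongDual ℝ (Fin d → ℝ))))
    (hΩd : Ωd = {φ : ℙ ℝ (StrongDual ℝ (Fin d → ℝ)) |
      ∀ x ∈ Ω, Projectivization.rep φ (Projectivization.rep x) ≠ 0})
    (hΩdcpt : IsCompact Ωd) (hΩdint : (interior Ωd).Nonempty)
    (hcomplete : ∀ u : ℕ → ℙ ℝ (Fin d → ℝ), (∀ n, u n ∈ Ω) →
      (∀ ε : ℝ, 0 < ε → ∃ N : ℕ, ∀ m ≥ N, ∀ n ≥ N, crossDist Ωd (u m) (u n) < ε) →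
      ∃ x ∈ Ω, Filter.Tendsto (fun n => crossDist Ωd (u n) x) Filter.atTop (nhds 0)) :
    ∀ x ∈ frontier Ω, ∃ ξ ∈ Ωd,
      Projectivization.rep ξ (Projectivization.rep x) = 0 := by
  intro x hx
  by_contra! hx0
  have hΩ : ∀ z ∈ Ω, ∀ φ ∈ Ωd, φ.rep z.rep ≠ 0 := fun z hz φ hφ => by
    rw [hΩd] at hφ
    exact hφ z hz
  rw [hopen.frontier_eq] at hx
  obtain ⟨δ, hδ, hvδ⟩ := exists_farFromKernels hΩdcpt hx0
  set v : {v : Fin d → ℝ // v ≠ 0} := ⟨x.rep, x.rep_nonzero⟩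
  have hxv : mk' ℝ v = x := x.mk_rep
  obtain ⟨w, hw, hwv⟩ := mem_closure_iff_seq_limit.1 <| mem_closure_inter_preimage_mk'
    (hxv ▸ hx.1) Metric.isOpen_ball (Metric.mem_ball_self (half_pos hδ))
  have hwδ : ∀ n, FarFromKernels Ωd (δ / 2) (w n : Fin d → ℝ) := fun n => by
    simpa only [sub_half] using hvδ.of_dist_le (w := (w n).1) (hw n).1.le
  obtain ⟨y, hyΩ, hy⟩ := hcomplete (fun n => mk' ℝ (w n)) (fun n => (hw n).2)
    fun ε hε => exists_crossDist_lt_of_cauchySeq (half_pos hδ) hwv.cauchySeq hwδ hε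
  have hxw := tendsto_crossDist_mk' (half_pos hδ) hwv hwδ (hvδ.mono (half_le_self hδ.le))
  rw [hxv] at hxw
  have hxy : crossDist Ωd x y ≤ 0 := by
    refine ge_of_tendsto' (by simpa only [add_zero] using hxw.add hy) fun n => ?_
    rw [crossDist_comm _ x]
    exact crossDist_triangle hΩdcpt hx0 (hΩ y hyΩ) (hΩ _ (hw n).2)
  exact hx.2 (eq_of_crossDist_nonpos hΩdcpt hΩdint hx0 (hΩ y hyΩ) hxy ▸ hyΩ)

/-- Let `V = ℝ^d`, `Ω ⊆ P(V)` a connected open set whose dual set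
`Ω* = {[f] : f(x) ≠ 0 ∀ [x] ∈ Ω}` is compact with nonempty interior.  If `(Ω, C_Ω)` is a
complete metric space (every `C_Ω`-Cauchy sequence in `Ω` converges in `C_Ω` to a point of
`Ω`), then `Ω` is dual convex: every boundary point `x ∈ ∂Ω` satisfies `ξ(x) = 0` for some
`[ξ] ∈ Ω*`. -/
theorem stmt_11 (d : ℕ)
    (Ω : Set (ℙ ℝ (Fin d → ℝ))) (hopen : IsOpen Ω) (hconn : IsConnected Ω)
    (Ωd : Set (ℙ ℝ (StrongDual ℝ (Fin d → ℝ))))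
    (hΩd : Ωd = {φ : ℙ ℝ (StrongDual ℝ (Fin d → ℝ)) |
      ∀ x ∈ Ω, Projectivization.rep φ (Projectivization.rep x) ≠ 0})
    (hΩdcpt : IsCompact Ωd) (hΩdint : (interior Ωd).Nonempty)
    (hcomplete : ∀ u : ℕ → ℙ ℝ (Fin d → ℝ), (∀ n, u n ∈ Ω) →
      (∀ ε : ℝ, 0 < ε → ∃ N : ℕ, ∀ m ≥ N, ∀ n ≥ N, crossDist Ωd (u m) (u n) < ε) →
      ∃ x ∈ Ω, Filter.Tendsto (fun n => crossDist Ωd (u n) x) Filter.atTop (nhds 0)) :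
    ∀ x ∈ frontier Ω, ∃ ξ ∈ Ωd,
      Projectivization.rep ξ (Projectivization.rep x) = 0 :=
  stmt_11_general d Ω hopen Ωd hΩd hΩdcpt hΩdint hcomplete
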